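/- Let N = 2K + 1 be odd, let θ_j = 2πj/N for j = 0, …, N−1, and let D ∈ ℂ^{N×N} be the Fourier spectral differentiation matrix with entries D_{jk} = (1/2)(−1)^{j−k} / sin(π(j−k)/N) for j ≠ k and D_{jj} = 0. Then for every integer k with |k| ≤ K, the vector v ∈ ℂ^N with components v_j = e^{i k θ_j} satisfies D v = i k v; that is, D exactly differentiates each resolvable Fourier mode. -/

import Mathlib

/-!
With `N = 2K + 1` and `ω = exp (2πi/N)`, the entries of `D` are the inverse discrete Fourier
transform of the symbol `m ↦ i m` on the resolvable frequencies `|m| ≤ K`: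
`D_{jl} = N⁻¹ ∑_{|m| ≤ K} i m ω^{m (j - l)}`.
To see this, put `z = exp (iπ d / N)` with `d = j - l`; then `(-1)^d = z^N`,
`sin (π d / N) = (z - z⁻¹) / 2i` and `ω^d = z²`, so the entry is `i w^{K+1} / (w - 1)` with
`w = ω^d`, which is `N⁻¹ ∑_m i m w^m` because `(w - 1) ∑_{t<N} t w^t = N` when `w^N = 1 ≠ w`.
Orthogonality of the characters `l ↦ ω^{(k-m) l}` (for `|k - m| < N`) then picks out the single
frequency `m = k` in `D v`.
-/

open Finset Complex

theorem sub_one_mul_sum_range_mul_pow {R : Type*} [CommRing R] (w : R) (n : ℕ) :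
    (w - 1) * ∑ t ∈ range n, (t : R) * w ^ t = n * w ^ n - w * ∑ t ∈ range n, w ^ t := by
  induction n with
  | zero => simp
  | succ n ih =>
    rw [sum_range_succ, sum_range_succ, mul_add, ih]
    push_cast
    ring

theorem sum_intCast_Icc_neg_eq_zero {R : Type*} [AddCommGroupWithOne R] (K : ℕ) :
    ∑ m ∈ Icc (-K : ℤ) K, (m : R) = 0 := by
  induction K with
  | zero => simp
  | succ K ih =>
    rw [Nat.cast_succ, sum_Icc_succ_eq_add_endpoints, ih]
    push_cast
    abel

theorem sum_Icc_mul_zpow_of_pow_eq_one {F : Type*} [Field F] {w : F} (K : ℕ)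
    (hw : w ^ (2 * K + 1) = 1) (hw1 : w ≠ 1) :
    ∑ m ∈ Icc (-K : ℤ) K, (m : F) * w ^ m = (2 * K + 1 : ℕ) * w ^ (K + 1) / (w - 1) := by
  have hw0 : w ≠ 0 := by rintro rfl; simp at hw
  have hgeom : ∑ t ∈ range (2 * K + 1), w ^ t = 0 := by
    rw [geom_sum_eq hw1, hw, sub_self, zero_div]
  have hweighted := sub_one_mul_sum_range_mul_pow w (2 * K + 1)
  rw [hgeom, hw, mul_zero, sub_zero, mul_one] at hweighted
  have hshift : ∑ m ∈ Icc (-K : ℤ) K, (m : F) * w ^ m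
      = w ^ (-K : ℤ) * (∑ t ∈ range (2 * K + 1), (t : F) * w ^ t
          - K * ∑ t ∈ range (2 * K + 1), w ^ t) := by
    rw [Int.Icc_eq_finset_map, sum_map, show ((K : ℤ) + 1 - -K).toNat = 2 * K + 1 by omega,
      mul_sum, ← sum_sub_distrib, mul_sum]
    refine sum_congr rfl fun t _ => ?_
    simp only [Function.Embedding.trans_apply, Nat.castEmbedding_apply, addLeftEmbedding_apply]
    rw [zpow_add₀ hw0, zpow_natCast]
    push_cast
    ring
  have hKpow : w ^ (-K : ℤ) = w ^ (K + 1) := by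
    rw [zpow_neg, zpow_natCast]
    exact inv_eq_of_mul_eq_one_right (by rw [← pow_add, ← hw]; ring_nf)
  rw [hshift, hgeom, mul_zero, sub_zero, hKpow, eq_div_iff (sub_ne_zero.mpr hw1), mul_assoc,
    mul_comm _ (w - 1), hweighted, mul_comm]

theorem IsPrimitiveRoot.sum_zpow_mul_eq_ite {F : Type*} [Field F] {ζ : F} {n : ℕ}
    (hζ : IsPrimitiveRoot ζ n) {e : ℤ} (he : |e| < n) :
    ∑ l : Fin n, ζ ^ (e * l) = if e = 0 then (n : F) else 0 := by
  have hsum : ∑ l : Fin n, ζ ^ (e * l) = ∑ l ∈ range n, (ζ ^ e) ^ l := by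
    rw [← Fin.sum_univ_eq_sum_range]
    simp only [zpow_mul, zpow_natCast]
  split_ifs with h0
  · simp [h0]
  · have hne : ζ ^ e ≠ 1 := fun h =>
      h0 (Int.eq_zero_of_abs_lt_dvd ((hζ.zpow_eq_one_iff_dvd e).mp h) he)
    rw [hsum, geom_sum_eq hne, ← zpow_natCast, ← zpow_mul, mul_comm, zpow_mul, zpow_natCast,
      hζ.pow_eq_one, one_zpow, sub_self, zero_div]

theorem IsPrimitiveRoot.sum_inv_dft_mul_zpow {F : Type*} [Field F] {ζ : F} {K : ℕ}
    (hζ : IsPrimitiveRoot ζ (2 * K + 1)) (c : ℤ → F) {k : ℤ} (hk : |k| ≤ K) (j : ℤ) :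
    ∑ l : Fin (2 * K + 1), ((2 * K + 1 : ℕ) : F)⁻¹ *
        (∑ m ∈ Icc (-K : ℤ) K, c m * ζ ^ (m * (j - l))) * ζ ^ (k * l)
      = c k * ζ ^ (k * j) := by
  obtain ⟨hk₁, hk₂⟩ := abs_le.mp hk
  have hN : ((2 * K + 1 : ℕ) : F) ≠ 0 := hζ.neZero'.out
  have hsplit (m l : ℤ) : ζ ^ (m * (j - l)) * ζ ^ (k * l) = ζ ^ (m * j) * ζ ^ ((k - m) * l) := by
    rw [← zpow_add₀ (hζ.ne_zero (by omega)), ← zpow_add₀ (hζ.ne_zero (by omega))]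
    ring_nf
  calc ∑ l : Fin (2 * K + 1), ((2 * K + 1 : ℕ) : F)⁻¹ *
          (∑ m ∈ Icc (-K : ℤ) K, c m * ζ ^ (m * (j - l))) * ζ ^ (k * l)
      = ((2 * K + 1 : ℕ) : F)⁻¹ * ∑ m ∈ Icc (-K : ℤ) K,
          c m * ζ ^ (m * j) * ∑ l : Fin (2 * K + 1), ζ ^ ((k - m) * l) := by
        simp only [mul_sum, sum_mul]
        rw [sum_comm]
        refine sum_congr rfl fun m _ => sum_congr rfl fun l _ => ?_
        linear_combination (((2 * K + 1 : ℕ) : F)⁻¹ * c m) * hsplit m l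
    _ = ((2 * K + 1 : ℕ) : F)⁻¹ * ∑ m ∈ Icc (-K : ℤ) K,
          c m * ζ ^ (m * j) * if k - m = 0 then ((2 * K + 1 : ℕ) : F) else 0 := by
        refine congrArg _ (sum_congr rfl fun m hm => ?_)
        rw [mem_Icc] at hm
        rw [hζ.sum_zpow_mul_eq_ite (abs_lt.mpr ⟨by omega, by omega⟩)]
    _ = c k * ζ ^ (k * j) := by
        simp only [sub_eq_zero, mul_ite, mul_zero, sum_ite_eq, mem_Icc, hk₁, hk₂, and_self,
          if_true]
        field_simp

-- Where `sin (π d / N) = 0` both sides vanish through `x / 0 = 0`.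
theorem half_neg_one_zpow_div_sin (K : ℕ) (d : ℤ) :
    (1 / 2) * (-1 : ℂ) ^ d / sin (Real.pi * d / (2 * K + 1 : ℕ))
      = I * (exp (2 * Real.pi * I / (2 * K + 1 : ℕ)) ^ d) ^ (K + 1)
          / (exp (2 * Real.pi * I / (2 * K + 1 : ℕ)) ^ d - 1) := by
  have hN : ((2 * K + 1 : ℕ) : ℂ) ≠ 0 := Nat.cast_ne_zero.mpr (by omega)
  set z := exp (Real.pi * d / (2 * K + 1 : ℕ) * I)
  have hz0 : z ≠ 0 := exp_ne_zero _
  have hsq : exp (2 * Real.pi * I / (2 * K + 1 : ℕ)) ^ d = z ^ 2 := by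
    rw [← exp_int_mul, ← exp_nat_mul]
    congr 1
    push_cast
    ring
  have hpow : (-1 : ℂ) ^ d = z ^ (2 * K + 1) := by
    rw [← exp_pi_mul_I, ← exp_int_mul, ← exp_nat_mul]
    congr 1
    field_simp
  have hsin : sin (Real.pi * d / (2 * K + 1 : ℕ)) = (z⁻¹ - z) * I / 2 := by
    rw [sin, neg_mul, exp_neg]
  have hden : (z⁻¹ - z) * I / 2 = (z ^ 2 - 1) / (2 * I * z) := by
    field_simp
    rw [I_sq]
    ring
  rw [hsq, hpow, hsin, hden, div_div_eq_mul_div]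
  congr 1
  ring

theorem half_neg_one_zpow_div_sin_eq_sum (K : ℕ) {d : ℤ}
    (hd : exp (2 * Real.pi * I / (2 * K + 1 : ℕ)) ^ d ≠ 1) :
    (1 / 2) * (-1 : ℂ) ^ d / sin (Real.pi * d / (2 * K + 1 : ℕ))
      = ((2 * K + 1 : ℕ) : ℂ)⁻¹ * ∑ m ∈ Icc (-K : ℤ) K,
          I * m * exp (2 * Real.pi * I / (2 * K + 1 : ℕ)) ^ (m * d) := by
  rw [half_neg_one_zpow_div_sin]
  set w := exp (2 * Real.pi * I / (2 * K + 1 : ℕ)) ^ d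
  have hw : w ^ (2 * K + 1) = 1 := by
    rw [← zpow_natCast, ← zpow_mul, mul_comm d, zpow_mul, zpow_natCast,
      (isPrimitiveRoot_exp _ (by omega)).pow_eq_one, one_zpow]
  have hsum : ∑ m ∈ Icc (-K : ℤ) K, I * m * exp (2 * Real.pi * I / (2 * K + 1 : ℕ)) ^ (m * d)
      = I * ∑ m ∈ Icc (-K : ℤ) K, (m : ℂ) * w ^ m := by
    rw [mul_sum]
    refine sum_congr rfl fun m _ => ?_
    rw [mul_comm m d, zpow_mul, mul_assoc]
  have hN : ((2 * K + 1 : ℕ) : ℂ) ≠ 0 := Nat.cast_ne_zero.mpr (by omega)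
  rw [hsum, sum_Icc_mul_zpow_of_pow_eq_one K hw hd]
  field_simp

theorem spectral_diff_entry_eq_sum (K : ℕ) (j l : Fin (2 * K + 1)) :
    (if j = l then 0 else
        (1 / 2) * (-1 : ℂ) ^ ((j : ℤ) - (l : ℤ))
          / sin ((Real.pi : ℂ) * (((j : ℤ) - (l : ℤ) : ℤ) : ℂ) / ((2 * K + 1 : ℕ) : ℂ)))
      = ((2 * K + 1 : ℕ) : ℂ)⁻¹ * ∑ m ∈ Icc (-K : ℤ) K,
          I * m * exp (2 * Real.pi * I / (2 * K + 1 : ℕ)) ^ (m * ((j : ℤ) - l)) := by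
  split_ifs with hjl
  · simp [hjl, ← mul_sum, sum_intCast_Icc_neg_eq_zero]
  · refine half_neg_one_zpow_div_sin_eq_sum K fun h => hjl (Fin.ext ?_)
    have := Int.eq_zero_of_abs_lt_dvd
      (((isPrimitiveRoot_exp _ (by omega)).zpow_eq_one_iff_dvd _).mp h)
      (abs_lt.mpr ⟨by omega, by omega⟩)
    omega

theorem exp_I_mul_angle_eq_zpow (n : ℕ) (k : ℤ) (j : ℕ) :
    exp (I * k * ((2 * Real.pi * j / n : ℝ) : ℂ)) = exp (2 * Real.pi * I / n) ^ (k * j) := by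
  rw [← exp_int_mul]
  congr 1
  push_cast
  ring

/-- **The Fourier spectral differentiation matrix exactly differentiates resolvable modes.**
With `N = 2K+1` odd, collocation points `θ_j = 2πj/N`, and `D` the Fourier spectral
differentiation matrix (`D_{jk} = (1/2)(-1)^{j-k}/sin(π(j-k)/N)` off-diagonal, `0` on the
diagonal), every integer `k` with `|k| ≤ K` and the mode `v_j = e^{i k θ_j}` satisfy
`D v = i k v`. -/
theorem spectral_diff_matrix_eigenmode
    (K : ℕ) (D : Matrix (Fin (2 * K + 1)) (Fin (2 * K + 1)) ℂ)
    (hD : ∀ j l : Fin (2 * K + 1), D j l =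
      if j = l then 0 else
        (1 / 2) * (-1 : ℂ) ^ ((j : ℤ) - (l : ℤ))
          / Complex.sin ((Real.pi : ℂ) * (((j : ℤ) - (l : ℤ) : ℤ) : ℂ) / ((2 * K + 1 : ℕ) : ℂ)))
    (k : ℤ) (hk : |k| ≤ (K : ℤ)) (v : Fin (2 * K + 1) → ℂ)
    (hv : ∀ j : Fin (2 * K + 1), v j =
      Complex.exp (Complex.I * (k : ℂ) * ((2 * Real.pi * (j : ℕ) / (2 * K + 1 : ℕ) : ℝ) : ℂ))) :
    D.mulVec v = (Complex.I * (k : ℂ)) • v := by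
  ext j
  simp only [Matrix.mulVec, dotProduct, hD, spectral_diff_entry_eq_sum, hv,
    exp_I_mul_angle_eq_zpow, Pi.smul_apply, smul_eq_mul]
  exact (isPrimitiveRoot_exp _ (by omega)).sum_inv_dft_mul_zpow (fun m => I * m) hk j
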